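/- Hermitian case of the Carathéodory correspondence: suppose F(y,z) = ½ h_{jk}(y) conj(z^j) z^k with h Hermitian. Then the Carathéodory field equations 2∂F/∂z̄^j = −i Ā_{jk} z^k + (A_{j,n+2} + iA_{n+1,j}) reduce to the linear system h*_{jk} z^k = A_{j,n+2} + i A_{n+1,j} with h*_{jk} := h_{jk} + i Ā_{jk}; this system has a unique solution z ∈ ℂⁿ if and only if det(h*) ≠ 0, and when it does, the Carathéodory Hamiltonian equals 𝓗(y,A) = ½ K^{jk}(A_{j,n+2} − iA_{n+1,j})(A_{k,n+2} + iA_{n+1,k}) + A_{n+1,n+2}, where K is the inverse matrix of h*. -/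

import Mathlib

/-!
Since `h` is Hermitian, the real derivative of `F z = ½ Re (z* h z)` in the direction `v` is
`Re (v* h z)`, so the Wirtinger combination `2 ∂F/∂z̄ʲ` equals `(h z)ʲ` and the field equations
become `h* z = b`. Antisymmetry of `A` makes `i Ā` Hermitian, hence `h*` is Hermitian too. For the
solution `z`, `b* K b = b* z` is the complex conjugate of `z* h* z`, hence real, and its real part
is `∑ⱼ (A_{j,n+2} Re zʲ + A_{n+1,j} Im zʲ)`.
-/

open scoped BigOperators Matrix

/-- The index `n+1` (the `(n+1)`-st slot) in `Fin (n+2)`. -/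
def idxN1 (n : ℕ) : Fin (n + 2) := ⟨n, by omega⟩

/-- The index `n+2` (the last slot) in `Fin (n+2)`. -/
def idxN2 (n : ℕ) : Fin (n + 2) := ⟨n + 1, by omega⟩

/-- `h*_{jk} := h_{jk} + i Ā_{jk}` where `Ā` is the upper-left `n×n` block of `A`. -/
noncomputable def hstar (n : ℕ) (h : Matrix (Fin n) (Fin n) ℂ)
    (A : Matrix (Fin (n + 2)) (Fin (n + 2)) ℝ) : Matrix (Fin n) (Fin n) ℂ :=
  Matrix.of fun j k => h j k + Complex.I * (A (Fin.castAdd 2 j) (Fin.castAdd 2 k) : ℂ)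

/-- The right-hand side `b_j := A_{j,n+2} + i A_{n+1,j}`. -/
noncomputable def bvec (n : ℕ) (A : Matrix (Fin (n + 2)) (Fin (n + 2)) ℝ) :
    Fin n → ℂ :=
  fun j => (A (Fin.castAdd 2 j) (idxN2 n) : ℂ)
    + Complex.I * (A (idxN1 n) (Fin.castAdd 2 j) : ℂ)

open Matrix Complex

namespace Matrix

variable {ι : Type*} [Fintype ι]

theorem star_dotProduct_mulVec_eq_sum_sum (M : Matrix ι ι ℂ) (u v : ι → ℂ) :
    star u ⬝ᵥ M *ᵥ v = ∑ j, ∑ k, M j k * starRingEnd ℂ (u j) * v k := by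
  simp only [dotProduct, mulVec, Finset.mul_sum, Pi.star_apply, starRingEnd_apply]
  exact Finset.sum_congr rfl fun j _ => Finset.sum_congr rfl fun k _ => by ring

theorem existsUnique_mulVec_eq_iff_det_ne_zero {K : Type*} [Field K] [DecidableEq ι]
    (M : Matrix ι ι K) (b : ι → K) : (∃! x, M *ᵥ x = b) ↔ M.det ≠ 0 := by
  refine ⟨fun ⟨x, hx, huniq⟩ hdet => ?_, fun hdet => ?_⟩
  · obtain ⟨v, hv, hMv⟩ := exists_mulVec_eq_zero_iff.mpr hdet
    have : x + v = x := huniq _ (show M *ᵥ (x + v) = b by rw [mulVec_add, hMv, add_zero, hx])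
    exact hv (by simpa using this)
  · have hM : IsUnit M := (isUnit_iff_isUnit_det M).mpr (isUnit_iff_ne_zero.mpr hdet)
    exact Function.Bijective.existsUnique
      ⟨mulVec_injective_iff_isUnit.mpr hM, mulVec_surjective_iff_isUnit.mpr hM⟩ b

variable {M : Matrix ι ι ℂ}

theorem IsHermitian.star_dotProduct_mulVec_comm (hM : M.IsHermitian) (v w : ι → ℂ) :
    star v ⬝ᵥ M *ᵥ w = star (star w ⬝ᵥ M *ᵥ v) := by
  rw [star_dotProduct, star_mulVec, ← dotProduct_mulVec, hM.eq]

theorem IsHermitian.fderiv_half_re_star_dotProduct_mulVec (hM : M.IsHermitian) (z v : ι → ℂ) :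
    fderiv ℝ (fun z => (star z ⬝ᵥ M *ᵥ z).re / 2) z v = (star v ⬝ᵥ M *ᵥ z).re := by
  let L : (ι → ℂ) →L[ℝ] (ι → ℂ) :=
    LinearMap.toContinuousLinearMap ((mulVecLin M).restrictScalars ℝ)
  have hL : HasFDerivAt (fun z => M *ᵥ z) L z := L.hasFDerivAt
  have hG : HasFDerivAt (fun z : ι → ℂ => star z ⬝ᵥ M *ᵥ z) _ z :=
    HasFDerivAt.fun_sum fun i _ => (hasFDerivAt_apply i z).star.mul (hasFDerivAt_pi'.1 hL i)
  have hF : HasFDerivAt (fun z => (star z ⬝ᵥ M *ᵥ z).re * 2⁻¹) _ z :=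
    (reCLM.hasFDerivAt.comp z hG).mul_const (2 : ℝ)⁻¹
  have hG_apply : ∑ i, (star (z i) * (M *ᵥ v) i + (M *ᵥ z) i * star (v i))
      = star z ⬝ᵥ M *ᵥ v + star v ⬝ᵥ M *ᵥ z := by
    simp only [dotProduct, Pi.star_apply, ← Finset.sum_add_distrib, mul_comm]
  simp_rw [div_eq_mul_inv]
  rw [hF.fderiv]
  simp only [_root_.smul_apply, ContinuousLinearMap.comp_apply,
    _root_.sum_apply, _root_.add_apply, ContinuousLinearMap.proj_apply,
    L, LinearMap.coe_toContinuousLinearMap', LinearMap.restrictScalars_apply, mulVecLin_apply,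
    ContinuousLinearEquiv.coe_coe, starL'_apply, Pi.star_apply, smul_eq_mul, reCLM_apply]
  rw [hG_apply, hM.star_dotProduct_mulVec_comm z v, add_re, star_def, conj_re]
  ring

theorem IsHermitian.star_dotProduct_inv_mulVec [DecidableEq ι] (hM : M.IsHermitian)
    (hdet : M.det ≠ 0) {z b : ι → ℂ} (hz : M *ᵥ z = b) :
    star b ⬝ᵥ M⁻¹ *ᵥ b = ((star b ⬝ᵥ z).re : ℂ) := by
  have hinv : M⁻¹ *ᵥ b = z := by
    rw [← hz, mulVec_mulVec, nonsing_inv_mul _ (isUnit_iff_ne_zero.mpr hdet), one_mulVec]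
  have hreal : (star b ⬝ᵥ z).im = 0 := by
    rw [star_dotProduct, ← hz, star_def, conj_im, neg_eq_zero]
    exact hM.im_star_dotProduct_mulVec_self z
  rw [hinv]
  exact Complex.ext (by simp) (by simp [hreal])

end Matrix

section Wirtinger

variable {ι : Type*} [Fintype ι] [DecidableEq ι]

theorem re_star_single_one_add_I_mul (w : ι → ℂ) (j : ι) :
    ((star (Pi.single j 1) ⬝ᵥ w).re : ℂ) + I * (star (Pi.single j I) ⬝ᵥ w).re = w j := by
  simp only [Pi.star_single, star_one, RCLike.star_def, conj_I, single_dotProduct, one_mul, neg_mul,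
    neg_re, I_mul_re, neg_neg]
  rw [mul_comm, re_add_im]

-- The left-hand side is the Wirtinger derivative `2 ∂F/∂z̄ʲ`.
theorem fderiv_single_add_I_mul_fderiv_single_I_eq_mulVec {M : Matrix ι ι ℂ} (hM : M.IsHermitian)
    {F : (ι → ℂ) → ℝ}
    (hF : ∀ z, (F z : ℂ) = (1 / 2 : ℂ) * ∑ j, ∑ k, M j k * starRingEnd ℂ (z j) * z k)
    (z : ι → ℂ) (j : ι) :
    (fderiv ℝ F z (Pi.single j 1) : ℂ) + I * (fderiv ℝ F z (Pi.single j I) : ℂ) = (M *ᵥ z) j := by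
  have hF' : F = fun z => (star z ⬝ᵥ M *ᵥ z).re / 2 := funext fun z => by
    rw [← ofReal_re (F z), hF, ← star_dotProduct_mulVec_eq_sum_sum]
    simp [div_eq_inv_mul]
  rw [hF', hM.fderiv_half_re_star_dotProduct_mulVec, hM.fderiv_half_re_star_dotProduct_mulVec]
  exact re_star_single_one_add_I_mul _ _

end Wirtinger

section Caratheodory

variable {n : ℕ}

-- The paper's `Ā`, as a complex matrix.
def upperLeftBlock (A : Matrix (Fin (n + 2)) (Fin (n + 2)) ℝ) : Matrix (Fin n) (Fin n) ℂ :=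
  (A.submatrix (Fin.castAdd 2) (Fin.castAdd 2)).map (↑)

theorem hstar_eq (h : Matrix (Fin n) (Fin n) ℂ) (A : Matrix (Fin (n + 2)) (Fin (n + 2)) ℝ) :
    hstar n h A = h + I • upperLeftBlock A := by
  ext j k
  simp [hstar, upperLeftBlock]

theorem conjTranspose_upperLeftBlock {A : Matrix (Fin (n + 2)) (Fin (n + 2)) ℝ} (hA : Aᵀ = -A) :
    (upperLeftBlock A)ᴴ = -upperLeftBlock A := by
  ext j k
  simpa [upperLeftBlock] using congrArg (fun B => (B (Fin.castAdd 2 j) (Fin.castAdd 2 k) : ℂ)) hA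

theorem isHermitian_hstar {h : Matrix (Fin n) (Fin n) ℂ} (hh : h.IsHermitian)
    {A : Matrix (Fin (n + 2)) (Fin (n + 2)) ℝ} (hA : Aᵀ = -A) : (hstar n h A).IsHermitian := by
  rw [hstar_eq, IsHermitian, conjTranspose_add, conjTranspose_smul, conjTranspose_upperLeftBlock hA,
    hh.eq, star_def, conj_I, neg_smul_neg]

theorem re_star_bvec_dotProduct (A : Matrix (Fin (n + 2)) (Fin (n + 2)) ℝ) (z : Fin n → ℂ) :
    (star (bvec n A) ⬝ᵥ z).re = ∑ j, (A (Fin.castAdd 2 j) (idxN2 n) * (z j).re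
      + A (idxN1 n) (Fin.castAdd 2 j) * (z j).im) := by
  simp [dotProduct, bvec, re_sum, mul_re]

end Caratheodory

/-- For `F(y,z) = ½ h_{jk} conj(z^j) z^k` with `h` Hermitian, the
Carathéodory field equations `2∂F/∂z̄^j = −i Ā_{jk} z^k + (A_{j,n+2} + iA_{n+1,j})`
reduce to the linear system `h* z = b`; this has a unique solution iff `det h* ≠ 0`,
and then the Carathéodory Hamiltonian
`𝓗 = ½(A_{j,n+2} z^j_1 + A_{n+1,j} z^j_2) + A_{n+1,n+2}` equals
`½ K^{jk}(A_{j,n+2} − iA_{n+1,j})(A_{k,n+2} + iA_{n+1,k}) + A_{n+1,n+2}`, `K = (h*)⁻¹`. -/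
theorem caratheodory_hermitian_case
    (n : ℕ) (h : Matrix (Fin n) (Fin n) ℂ) (hherm : h.IsHermitian)
    (A : Matrix (Fin (n + 2)) (Fin (n + 2)) ℝ) (hA : Aᵀ = -A)
    (F : (Fin n → ℂ) → ℝ)
    (hFdef : ∀ z : Fin n → ℂ,
      (F z : ℂ) = (1 / 2 : ℂ) * ∑ j : Fin n, ∑ k : Fin n,
        h j k * (starRingEnd ℂ) (z j) * z k) :
    (∀ z : Fin n → ℂ,
      (∀ j : Fin n,
        (fderiv ℝ F z (Pi.single j 1) : ℂ)
            + Complex.I * (fderiv ℝ F z (Pi.single j Complex.I) : ℂ)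
          = - Complex.I * (∑ k : Fin n,
              (A (Fin.castAdd 2 j) (Fin.castAdd 2 k) : ℂ) * z k) + bvec n A j) ↔
      (∀ j : Fin n, ∑ k : Fin n, hstar n h A j k * z k = bvec n A j)) ∧
    ((∃! z : Fin n → ℂ, ∀ j : Fin n, ∑ k : Fin n, hstar n h A j k * z k = bvec n A j)
      ↔ (hstar n h A).det ≠ 0) ∧
    ((hstar n h A).det ≠ 0 → ∀ z : Fin n → ℂ,
      (∀ j : Fin n, ∑ k : Fin n, hstar n h A j k * z k = bvec n A j) →
      (((1 / 2) * (∑ j : Fin n, (A (Fin.castAdd 2 j) (idxN2 n) * (z j).re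
            + A (idxN1 n) (Fin.castAdd 2 j) * (z j).im))
          + A (idxN1 n) (idxN2 n) : ℝ) : ℂ)
        = (1 / 2 : ℂ) * (∑ j : Fin n, ∑ k : Fin n,
            (hstar n h A)⁻¹ j k * (starRingEnd ℂ) (bvec n A j) * bvec n A k)
          + (A (idxN1 n) (idxN2 n) : ℂ)) := by
  have hsys : ∀ z, (∀ j, ∑ k, hstar n h A j k * z k = bvec n A j) ↔ hstar n h A *ᵥ z = bvec n A :=
    fun z => funext_iff.symm
  refine ⟨fun z => forall_congr' fun j => ?_, ?_, fun hdet z hz => ?_⟩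
  · rw [fderiv_single_add_I_mul_fderiv_single_I_eq_mulVec hherm hFdef z j]
    change _ ↔ (hstar n h A *ᵥ z) j = _
    rw [hstar_eq, add_mulVec, smul_mulVec, Pi.add_apply, Pi.smul_apply, smul_eq_mul]
    change _ ↔ _ + I * ∑ k, (A (Fin.castAdd 2 j) (Fin.castAdd 2 k) : ℂ) * z k = _
    constructor <;> intro he <;> linear_combination he
  · simp_rw [hsys]
    exact existsUnique_mulVec_eq_iff_det_ne_zero _ _
  · have hK := (isHermitian_hstar hherm hA).star_dotProduct_inv_mulVec hdet ((hsys z).1 hz)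
    rw [star_dotProduct_mulVec_eq_sum_sum, re_star_bvec_dotProduct] at hK
    rw [hK]
    push_cast
    ring
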